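/- arXiv:2512.05324 — 2 statements merged into one kernel-verified Lean document; each statement's English description precedes it below -/
import Mathlib

section
/- Let X, Y ⊂ R^n be closed convex with S := X ∩ Y ≠ ∅, and suppose the local error bound holds on a set V: ω·dist(z,S) ≤ max{dist(z,X), dist(z,Y)} for all z ∈ V, with ω ∈ (0,1). Set β := √(1−ω²). Then for any centralized z ∈ V, dist(PCRM(z), S) ≤ β·dist(z, S). -/
/-!
Let `s` be a point of `S = X ∩ Y` nearest to `z`. The supporting half-spaces at `P_X z` and
`P_Y z` contain `X` and `Y`, hence both contain `s`, so the projection `c` of `z` onto their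
intersection satisfies `‖s - c‖² + ‖z - c‖² ≤ ‖s - z‖²`. Since `c` lies beyond both supporting
hyperplanes, `‖z - c‖` dominates `dist(z, X)` and `dist(z, Y)`, hence `ω · dist(z, S)` by the
error bound, and therefore `‖s - c‖² ≤ (1 - ω²) dist(z, S)²`.
-/

open Metric
open scoped RealInnerProductSpace

section InnerProductSpace

variable {E : Type*} [NormedAddCommGroup E] [InnerProductSpace ℝ E]

theorem norm_sub_le_norm_sub_of_inner_nonpos {z c p : E} (h : ⟪c - p, z - p⟫ ≤ 0) :
    ‖z - p‖ ≤ ‖z - c‖ := by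
  have hinner : ⟪z - c, z - p⟫ = ‖z - p‖ ^ 2 - ⟪c - p, z - p⟫ := by
    rw [show z - c = (z - p) - (c - p) by abel, inner_sub_left, real_inner_self_eq_norm_sq]
  nlinarith [real_inner_le_norm (z - c) (z - p), norm_nonneg (z - p), norm_nonneg (z - c)]

theorem norm_sub_sq_add_norm_sub_sq_le_of_inner_nonpos {z c s : E} (h : ⟪z - c, s - c⟫ ≤ 0) :
    ‖s - c‖ ^ 2 + ‖z - c‖ ^ 2 ≤ ‖s - z‖ ^ 2 := by
  have hexpand := norm_sub_sq_real (s - c) (z - c)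
  rw [sub_sub_sub_cancel_right, real_inner_comm] at hexpand
  linarith

theorem infDist_le_norm_sub_of_supporting_halfspace {X : Set E} {z c p : E} (hp : p ∈ X)
    (hc : ⟪c - p, z - p⟫ ≤ 0) : infDist z X ≤ ‖z - c‖ :=
  calc infDist z X ≤ dist z p := infDist_le_dist_of_mem hp
    _ = ‖z - p‖ := dist_eq_norm z p
    _ ≤ ‖z - c‖ := norm_sub_le_norm_sub_of_inner_nonpos hc

end InnerProductSpace

theorem le_sqrt_one_sub_sq_mul {a b d ω : ℝ} (hω₀ : 0 ≤ ω) (hω₁ : ω ≤ 1) (hd : 0 ≤ d)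
    (hsum : a ^ 2 + b ^ 2 ≤ d ^ 2) (hb : ω * d ≤ b) : a ≤ Real.sqrt (1 - ω ^ 2) * d := by
  have hωd : 0 ≤ ω * d := mul_nonneg hω₀ hd
  have hsq : a ^ 2 ≤ (1 - ω ^ 2) * d ^ 2 := by nlinarith
  calc a ≤ Real.sqrt ((1 - ω ^ 2) * d ^ 2) := Real.le_sqrt_of_sq_le hsq
    _ = Real.sqrt (1 - ω ^ 2) * d := by rw [Real.sqrt_mul (by nlinarith), Real.sqrt_sq hd]

theorem stmt_14_general {n : ℕ} {X Y : Set (EuclideanSpace ℝ (Fin n))}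
    (hXc : IsClosed X)
    (hYc : IsClosed Y)
    (hS : (X ∩ Y).Nonempty)
    (PX PY : EuclideanSpace ℝ (Fin n) → EuclideanSpace ℝ (Fin n))
    (hPX : ∀ u, PX u ∈ X ∧ ∀ x ∈ X, ⟪u - PX u, x - PX u⟫ ≤ 0)
    (hPY : ∀ u, PY u ∈ Y ∧ ∀ x ∈ Y, ⟪u - PY u, x - PY u⟫ ≤ 0)
    (V : Set (EuclideanSpace ℝ (Fin n))) (ω : ℝ) (hω : ω ∈ Set.Ioo (0:ℝ) 1)
    (hEB : ∀ v ∈ V, ω * infDist v (X ∩ Y) ≤ max (infDist v X) (infDist v Y))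
    (z : EuclideanSpace ℝ (Fin n)) (hzV : z ∈ V)
    (c : EuclideanSpace ℝ (Fin n))
    (hcmem : c ∈ {w | ⟪w - PX z, z - PX z⟫ ≤ 0} ∩ {w | ⟪w - PY z, z - PY z⟫ ≤ 0})
    (hcproj : ∀ w ∈ {w | ⟪w - PX z, z - PX z⟫ ≤ 0} ∩ {w | ⟪w - PY z, z - PY z⟫ ≤ 0},
      ⟪z - c, w - c⟫ ≤ 0) :
    infDist c (X ∩ Y) ≤ Real.sqrt (1 - ω ^ 2) * infDist z (X ∩ Y) := by
  obtain ⟨s, hs, hzs⟩ := (hXc.inter hYc).exists_infDist_eq_dist hS z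
  have hs_halfspaces : s ∈ {w | ⟪w - PX z, z - PX z⟫ ≤ 0} ∩ {w | ⟪w - PY z, z - PY z⟫ ≤ 0} :=
    ⟨(real_inner_comm _ _).trans_le ((hPX z).2 s hs.1),
     (real_inner_comm _ _).trans_le ((hPY z).2 s hs.2)⟩
  have hpyth := norm_sub_sq_add_norm_sub_sq_le_of_inner_nonpos (hcproj s hs_halfspaces)
  have hδ : ω * infDist z (X ∩ Y) ≤ ‖z - c‖ := (hEB z hzV).trans <| max_le
    (infDist_le_norm_sub_of_supporting_halfspace (hPX z).1 hcmem.1)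
    (infDist_le_norm_sub_of_supporting_halfspace (hPY z).1 hcmem.2)
  calc infDist c (X ∩ Y) ≤ ‖s - c‖ := by
        rw [← dist_eq_norm, dist_comm]; exact infDist_le_dist_of_mem hs
    _ ≤ Real.sqrt (1 - ω ^ 2) * infDist z (X ∩ Y) := by
        refine le_sqrt_one_sub_sq_mul hω.1.le hω.2.le infDist_nonneg ?_ hδ
        rwa [hzs, dist_comm, dist_eq_norm]

theorem stmt_14 {n : ℕ} {X Y : Set (EuclideanSpace ℝ (Fin n))}
    (hXc : IsClosed X) (hXconv : Convex ℝ X)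
    (hYc : IsClosed Y) (hYconv : Convex ℝ Y)
    (hS : (X ∩ Y).Nonempty)
    (PX PY : EuclideanSpace ℝ (Fin n) → EuclideanSpace ℝ (Fin n))
    (hPX : ∀ u, PX u ∈ X ∧ ∀ x ∈ X, ⟪u - PX u, x - PX u⟫ ≤ 0)
    (hPY : ∀ u, PY u ∈ Y ∧ ∀ x ∈ Y, ⟪u - PY u, x - PY u⟫ ≤ 0)
    (V : Set (EuclideanSpace ℝ (Fin n))) (ω : ℝ) (hω : ω ∈ Set.Ioo (0:ℝ) 1)
    (hEB : ∀ v ∈ V, ω * infDist v (X ∩ Y) ≤ max (infDist v X) (infDist v Y))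
    (z : EuclideanSpace ℝ (Fin n)) (hzV : z ∈ V)
    (hcent : ⟪z - PX z, z - PY z⟫ ≤ 0)
    (c : EuclideanSpace ℝ (Fin n))
    (hcmem : c ∈ {w | ⟪w - PX z, z - PX z⟫ ≤ 0} ∩ {w | ⟪w - PY z, z - PY z⟫ ≤ 0})
    (hcproj : ∀ w ∈ {w | ⟪w - PX z, z - PX z⟫ ≤ 0} ∩ {w | ⟪w - PY z, z - PY z⟫ ≤ 0},
      ⟪z - c, w - c⟫ ≤ 0) :
    infDist c (X ∩ Y) ≤ Real.sqrt (1 - ω ^ 2) * infDist z (X ∩ Y) :=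
  stmt_14_general hXc hYc hS PX PY hPX hPY V ω hω hEB z hzV c hcmem hcproj
end

section
/- Let X, Y ⊂ R^n be closed convex with S = X ∩ Y ≠ ∅ satisfying the error bound ω·dist(z,S) ≤ max{dist(z,X),dist(z,Y)} near the limit point z̄ of the ecCRM iterates. Then the ecCRM sequence (z_k) converges Q-linearly to z̄ with ratio at most (1 + ω²/4)^{−1/2}: eventually ‖z_{k+1} − z̄‖ ≤ (1+ω²/4)^{−1/2}·‖z_k − z̄‖. -/
open Metric Filter Topology
open scoped RealInnerProductSpace

/-!
The PCRM step is the projection of `w = N^α z_k` onto the intersection of two halfspaces that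
contain `S = X ∩ Y` and whose bounding hyperplanes pass through `P_X w` and `P_Y w`. Hence for every
`s ∈ S` we get `‖z_{k+1} - s‖² + δ(z_{k+1})² ≤ ‖w - s‖² ≤ ‖z_k - s‖²`, where
`δ = max (dist(·, X)) (dist(·, Y))`. In particular `(z_k)` is Fejér monotone with respect to `S`, so
`‖z̄ - s‖ ≤ ‖z_k - s‖` and `‖z_k - z̄‖ ≤ 2 dist(z_k, S)`. Near `z̄` the error bound turns this into
`δ(z_{k+1}) ≥ (ω/2) ‖z_{k+1} - z̄‖`, and taking `s = z̄` gives
`(1 + ω²/4) ‖z_{k+1} - z̄‖² ≤ ‖z_k - z̄‖²`.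
-/

section Projection

variable {E : Type*} [NormedAddCommGroup E] [InnerProductSpace ℝ E]

def IsMetricProjection (X : Set E) (P : E → E) : Prop :=
  ∀ u, P u ∈ X ∧ ∀ x ∈ X, ⟪u - P u, x - P u⟫ ≤ 0

def projHalfspace (P : E → E) (w : E) : Set E :=
  {v | ⟪v - P w, w - P w⟫ ≤ 0}

theorem norm_sub_sq_add_norm_sub_sq_le {w c s : E} (h : ⟪w - c, s - c⟫ ≤ 0) :
    ‖w - c‖ ^ 2 + ‖c - s‖ ^ 2 ≤ ‖w - s‖ ^ 2 := by
  have hsplit : w - s = (w - c) - (s - c) := by abel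
  rw [hsplit, norm_sub_sq_real (w - c) (s - c), norm_sub_rev c s]
  linarith

theorem norm_sub_le_of_inner_nonpos {u p s : E} (h : ⟪u - p, s - p⟫ ≤ 0) :
    ‖p - s‖ ≤ ‖u - s‖ := by
  have := norm_sub_sq_add_norm_sub_sq_le h
  exact pow_le_pow_iff_left₀ (norm_nonneg _) (norm_nonneg _) two_ne_zero |>.mp
    (by nlinarith [sq_nonneg ‖u - p‖])

variable {X Y : Set E} {P PX PY : E → E}

namespace IsMetricProjection

theorem eq_of_forall_inner_nonpos (hP : IsMetricProjection X P) {w p : E} (hp : p ∈ X)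
    (h : ∀ x ∈ X, ⟪w - p, x - p⟫ ≤ 0) : P w = p := by
  have h₁ := (hP w).2 p hp
  have h₂ := h _ (hP w).1
  have hsq : ⟪p - P w, p - P w⟫ = ⟪w - P w, p - P w⟫ + ⟪w - p, P w - p⟫ := by
    simp only [inner_sub_left, inner_sub_right, real_inner_comm]
    ring
  exact (sub_eq_zero.mp (real_inner_self_nonpos.mp (by linarith))).symm

theorem apply_smul_add_one_sub_smul (hP : IsMetricProjection X P) {α : ℝ} (hα : 0 ≤ α)
    (u : E) : P (α • u + (1 - α) • P u) = P u := by
  refine hP.eq_of_forall_inner_nonpos (hP u).1 fun x hx => ?_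
  have hsub : α • u + (1 - α) • P u - P u = α • (u - P u) := by module
  rw [hsub, real_inner_smul_left]
  exact mul_nonpos_of_nonneg_of_nonpos hα ((hP u).2 x hx)

theorem norm_apply_sub_le (hP : IsMetricProjection X P) (u : E) {s : E} (hs : s ∈ X) :
    ‖P u - s‖ ≤ ‖u - s‖ :=
  norm_sub_le_of_inner_nonpos ((hP u).2 s hs)

theorem subset_projHalfspace (hP : IsMetricProjection X P) (w : E) :
    X ⊆ projHalfspace P w := fun x hx => by
  show ⟪x - P w, w - P w⟫ ≤ 0
  rw [real_inner_comm]
  exact (hP w).2 x hx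

theorem infDist_le_of_mem_projHalfspace (hP : IsMetricProjection X P) {v w : E}
    (hv : v ∈ projHalfspace P w) : infDist v X ≤ ‖v - w‖ :=
  calc infDist v X ≤ dist v (P w) := infDist_le_dist_of_mem (hP w).1
    _ = ‖P w - v‖ := by rw [dist_eq_norm, norm_sub_rev]
    _ ≤ ‖w - v‖ := by
      refine norm_sub_le_of_inner_nonpos ?_
      rw [real_inner_comm]
      exact hv
    _ = ‖v - w‖ := norm_sub_rev _ _

theorem norm_smul_add_one_sub_smul_sub_le (hP : IsMetricProjection X P) {α : ℝ}
    (hα : α ∈ Set.Icc (0 : ℝ) 1) (u : E) {s : E} (hs : s ∈ X) :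
    ‖α • u + (1 - α) • P u - s‖ ≤ ‖u - s‖ := by
  have hu : u ∈ closedBall s ‖u - s‖ := by rw [mem_closedBall, dist_eq_norm]
  have hPu : P u ∈ closedBall s ‖u - s‖ := by
    rw [mem_closedBall, dist_eq_norm]
    exact hP.norm_apply_sub_le u hs
  have hmem := convex_closedBall s ‖u - s‖ hu hPu hα.1 (sub_nonneg.mpr hα.2) (by ring)
  rwa [mem_closedBall, dist_eq_norm] at hmem

end IsMetricProjection

/-- This is the condition under which the PCRM step at `w` is specified. -/
theorem inner_sub_proj_sub_proj_nonpos (hPX : IsMetricProjection X PX)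
    (hPY : IsMetricProjection Y PY) {u : E} (hu : u ∈ Y) {α : ℝ} (hα : α ∈ Set.Ioo (0 : ℝ) 1) :
    let w := α • u + (1 - α) • PX u
    ⟪w - PX w, w - PY w⟫ ≤ 0 := by
  intro w
  have hwX : w - PX w = α • (u - PX u) := by
    simp only [w, hPX.apply_smul_add_one_sub_smul hα.1.le]
    module
  have hsplit : u - PY w = (1 - α) • (u - PX u) + (w - PY w) := by simp only [w]; module
  have hY : (1 - α) * ⟪w - PY w, u - PX u⟫ + ⟪w - PY w, w - PY w⟫ ≤ 0 := by
    rw [← real_inner_smul_right, ← inner_add_right, ← hsplit]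
    exact (hPY w).2 u hu
  have hangle : ⟪u - PX u, w - PY w⟫ ≤ 0 := by
    rw [real_inner_comm]
    nlinarith [real_inner_self_nonneg (x := w - PY w), hα.2]
  rw [hwX, real_inner_smul_left]
  exact mul_nonpos_of_nonneg_of_nonpos hα.1.le hangle

/-- The halfspaces contain `X ∩ Y`, and `‖w - c‖` dominates both distances of `c`. -/
theorem norm_sub_sq_add_max_infDist_sq_le (hPX : IsMetricProjection X PX)
    (hPY : IsMetricProjection Y PY) {w c : E}
    (hc : c ∈ projHalfspace PX w ∩ projHalfspace PY w)
    (hproj : ∀ v ∈ projHalfspace PX w ∩ projHalfspace PY w, ⟪w - c, v - c⟫ ≤ 0)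
    {s : E} (hs : s ∈ X ∩ Y) :
    ‖c - s‖ ^ 2 + max (infDist c X) (infDist c Y) ^ 2 ≤ ‖w - s‖ ^ 2 := by
  have hpyth := norm_sub_sq_add_norm_sub_sq_le
    (hproj s ⟨hPX.subset_projHalfspace w hs.1, hPY.subset_projHalfspace w hs.2⟩)
  have hmax : max (infDist c X) (infDist c Y) ≤ ‖w - c‖ := by
    rw [norm_sub_rev]
    exact max_le (hPX.infDist_le_of_mem_projHalfspace hc.1)
      (hPY.infDist_le_of_mem_projHalfspace hc.2)
  have hmax_sq := pow_le_pow_left₀ (le_max_of_le_left infDist_nonneg) hmax 2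
  linarith

end Projection

theorem dist_le_two_mul_infDist_of_antitone {M : Type*} [PseudoMetricSpace M] {S : Set M}
    {z : ℕ → M} {zbar : M} (hzbar : zbar ∈ S) (hlim : Tendsto z atTop (𝓝 zbar))
    (hfejer : ∀ s ∈ S, Antitone fun k => dist (z k) s) (k : ℕ) :
    dist (z k) zbar ≤ 2 * infDist (z k) S := by
  rw [← div_le_iff₀' two_pos, le_infDist ⟨zbar, hzbar⟩]
  intro s hs
  have hlim_s : dist zbar s ≤ dist (z k) s :=
    (hfejer s hs).le_of_tendsto (hlim.dist tendsto_const_nhds) k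
  rw [div_le_iff₀' two_pos]
  linarith [dist_triangle_right (z k) zbar s]

theorem le_inv_sqrt_mul_of_sq_add_sq_le {a b m ω : ℝ} (ha : 0 ≤ a) (hb : 0 ≤ b) (hω : 0 ≤ ω)
    (hm : ω / 2 * a ≤ m) (h : a ^ 2 + m ^ 2 ≤ b ^ 2) :
    a ≤ (Real.sqrt (1 + ω ^ 2 / 4))⁻¹ * b := by
  have hpos : 0 < 1 + ω ^ 2 / 4 := by positivity
  have hm_sq := pow_le_pow_left₀ (by positivity) hm 2
  rw [inv_mul_eq_div, le_div_iff₀ (Real.sqrt_pos.mpr hpos)]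
  refine (pow_le_pow_iff_left₀ (by positivity) hb two_ne_zero).mp ?_
  rw [mul_pow, Real.sq_sqrt hpos.le]
  nlinarith

theorem stmt_17_general {n : ℕ} {X Y : Set (EuclideanSpace ℝ (Fin n))}
    (PX PY : EuclideanSpace ℝ (Fin n) → EuclideanSpace ℝ (Fin n))
    (hPX : ∀ u, PX u ∈ X ∧ ∀ x ∈ X, ⟪u - PX u, x - PX u⟫ ≤ 0)
    (hPY : ∀ u, PY u ∈ Y ∧ ∀ x ∈ Y, ⟪u - PY u, x - PY u⟫ ≤ 0)
    (T : EuclideanSpace ℝ (Fin n) → EuclideanSpace ℝ (Fin n))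
    (hTY : ∀ u, T u ∈ Y)
    (hTqne : ∀ u, ∀ s ∈ X ∩ Y, ‖T u - s‖ ≤ ‖u - s‖)
    (C : EuclideanSpace ℝ (Fin n) → EuclideanSpace ℝ (Fin n))
    (hC : ∀ w : EuclideanSpace ℝ (Fin n), ⟪w - PX w, w - PY w⟫ ≤ 0 →
      C w ∈ {v | ⟪v - PX w, w - PX w⟫ ≤ 0} ∩ {v | ⟪v - PY w, w - PY w⟫ ≤ 0} ∧
      ∀ v ∈ {v | ⟪v - PX w, w - PX w⟫ ≤ 0} ∩ {v | ⟪v - PY w, w - PY w⟫ ≤ 0},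
        ⟪w - C w, v - C w⟫ ≤ 0)
    (α : ℕ → ℝ) (hα : ∀ k, α k ∈ Set.Ioo (0:ℝ) 1)
    (z : ℕ → EuclideanSpace ℝ (Fin n))
    (hz : ∀ k, z (k+1) = C (α k • T (z k) + (1 - α k) • PX (T (z k))))
    (zbar : EuclideanSpace ℝ (Fin n)) (hzbar : zbar ∈ X ∩ Y)
    (hlim : Tendsto z atTop (𝓝 zbar))
    (V : Set (EuclideanSpace ℝ (Fin n))) (hV : V ∈ 𝓝 zbar)
    (ω : ℝ) (hω : ω ∈ Set.Ioo (0:ℝ) 1)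
    (hEB : ∀ v ∈ V, ω * infDist v (X ∩ Y) ≤ max (infDist v X) (infDist v Y)) :
    ∃ K : ℕ, ∀ k ≥ K,
      ‖z (k+1) - zbar‖ ≤ (Real.sqrt (1 + ω ^ 2 / 4))⁻¹ * ‖z k - zbar‖ := by
  have hstep : ∀ k, ∀ s ∈ X ∩ Y, ‖z (k+1) - s‖ ^ 2
      + max (infDist (z (k+1)) X) (infDist (z (k+1)) Y) ^ 2 ≤ ‖z k - s‖ ^ 2 := by
    intro k s hs
    obtain ⟨hCmem, hCproj⟩ := hC _ (inner_sub_proj_sub_proj_nonpos hPX hPY (hTY (z k)) (hα k))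
    calc _ ≤ ‖α k • T (z k) + (1 - α k) • PX (T (z k)) - s‖ ^ 2 := by
          rw [hz k]; exact norm_sub_sq_add_max_infDist_sq_le hPX hPY hCmem hCproj hs
      _ ≤ ‖T (z k) - s‖ ^ 2 := by
          gcongr
          exact IsMetricProjection.norm_smul_add_one_sub_smul_sub_le hPX
            (Set.Ioo_subset_Icc_self (hα k)) _ hs.1
      _ ≤ ‖z k - s‖ ^ 2 := by gcongr; exact hTqne _ _ hs
  have hfejer : ∀ s ∈ X ∩ Y, Antitone fun k => dist (z k) s := fun s hs =>
    antitone_nat_of_succ_le fun k => by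
      simp only [dist_eq_norm]
      exact pow_le_pow_iff_left₀ (norm_nonneg _) (norm_nonneg _) two_ne_zero |>.mp
        (by nlinarith [hstep k s hs])
  obtain ⟨K, hK⟩ := eventually_atTop.mp (hlim hV)
  refine ⟨K, fun k hk => le_inv_sqrt_mul_of_sq_add_sq_le (norm_nonneg _) (norm_nonneg _)
    hω.1.le ?_ (hstep k zbar hzbar)⟩
  have hhalf := dist_le_two_mul_infDist_of_antitone hzbar hlim hfejer (k+1)
  rw [dist_eq_norm] at hhalf
  nlinarith [hEB _ (hK (k+1) (by omega)), hω.1]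

theorem stmt_17 {n : ℕ} {X Y : Set (EuclideanSpace ℝ (Fin n))}
    (hXc : IsClosed X) (hXconv : Convex ℝ X)
    (hYc : IsClosed Y) (hYconv : Convex ℝ Y)
    (hS : (X ∩ Y).Nonempty)
    (PX PY : EuclideanSpace ℝ (Fin n) → EuclideanSpace ℝ (Fin n))
    (hPX : ∀ u, PX u ∈ X ∧ ∀ x ∈ X, ⟪u - PX u, x - PX u⟫ ≤ 0)
    (hPY : ∀ u, PY u ∈ Y ∧ ∀ x ∈ Y, ⟪u - PY u, x - PY u⟫ ≤ 0)
    (T : EuclideanSpace ℝ (Fin n) → EuclideanSpace ℝ (Fin n))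
    (hTY : ∀ u, T u ∈ Y)
    (hTqne : ∀ u, ∀ s ∈ X ∩ Y, ‖T u - s‖ ≤ ‖u - s‖)
    (C : EuclideanSpace ℝ (Fin n) → EuclideanSpace ℝ (Fin n))
    (hC : ∀ w : EuclideanSpace ℝ (Fin n), ⟪w - PX w, w - PY w⟫ ≤ 0 →
      C w ∈ {v | ⟪v - PX w, w - PX w⟫ ≤ 0} ∩ {v | ⟪v - PY w, w - PY w⟫ ≤ 0} ∧
      ∀ v ∈ {v | ⟪v - PX w, w - PX w⟫ ≤ 0} ∩ {v | ⟪v - PY w, w - PY w⟫ ≤ 0},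
        ⟪w - C w, v - C w⟫ ≤ 0)
    (α : ℕ → ℝ) (hα : ∀ k, α k ∈ Set.Ioo (0:ℝ) 1)
    (z : ℕ → EuclideanSpace ℝ (Fin n))
    (hz : ∀ k, z (k+1) = C (α k • T (z k) + (1 - α k) • PX (T (z k))))
    (zbar : EuclideanSpace ℝ (Fin n)) (hzbar : zbar ∈ X ∩ Y)
    (hlim : Tendsto z atTop (𝓝 zbar))
    (V : Set (EuclideanSpace ℝ (Fin n))) (hV : V ∈ 𝓝 zbar)
    (ω : ℝ) (hω : ω ∈ Set.Ioo (0:ℝ) 1)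
    (hEB : ∀ v ∈ V, ω * infDist v (X ∩ Y) ≤ max (infDist v X) (infDist v Y)) :
    ∃ K : ℕ, ∀ k ≥ K,
      ‖z (k+1) - zbar‖ ≤ (Real.sqrt (1 + ω ^ 2 / 4))⁻¹ * ‖z k - zbar‖ :=
  stmt_17_general PX PY hPX hPY T hTY hTqne C hC α hα z hz zbar hzbar hlim V hV ω hω hEB
end
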